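/- Let W : ℕ → A be a recurrent infinite word over a finite alphabet A such that for some natural number N and constant K one has T_W(n) = n + K for all n ≥ N. Then there exists k such that every factor v of W with |v| ≥ k has exactly two distinct return words. -/

import Mathlib

/-- The factor of the infinite word `W` of length `n` occurring at position `i`. -/
def factorAt {A : Type*} (W : ℕ → A) (i n : ℕ) : List A :=
  (List.range n).map (fun j => W (i + j))

/-- `u` occurs in `W` at position `i`. -/
def occursAt {A : Type*} (W : ℕ → A) (u : List A) (i : ℕ) : Prop :=
  u = factorAt W i u.length

/-- `u` is a factor of the infinite word `W`. -/
def IsFactor {A : Type*} (W : ℕ → A) (u : List A) : Prop :=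
  ∃ i : ℕ, occursAt W u i

/-- `W` is recurrent: every factor occurs infinitely often. -/
def Recurrent {A : Type*} (W : ℕ → A) : Prop :=
  ∀ u : List A, IsFactor W u → {i : ℕ | occursAt W u i}.Infinite

/-- The complexity function: the number of distinct factors of `W` of length `n`. -/
noncomputable def complexity {A : Type*} (W : ℕ → A) (n : ℕ) : ℕ :=
  Set.ncard {u : List A | u.length = n ∧ IsFactor W u}

/-- `u` is a return word of the factor `v` of `W`: `u` is the word read between
two consecutive occurrences of `v` in `W`. -/
def IsReturnWord {A : Type*} (W : ℕ → A) (v u : List A) : Prop :=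
  ∃ i j : ℕ, i < j ∧ occursAt W v i ∧ occursAt W v j ∧
    (∀ m : ℕ, i < m → m < j → ¬ occursAt W v m) ∧
    u = factorAt W i (j - i)

/-!
If `v` had a single return word `r`, the occurrences of `v` from the first one on would be
spaced exactly `|r|` apart, making `W` eventually periodic and its complexity bounded.

Complexity `n + K` means that for every `n ≥ N` exactly one factor of length `n` is right
special, and it has exactly two right extensions. Complete return words `r v` of `v` are
prefix-free, so any two of them branch at a right-special prefix of length `≥ |v|`. Two branch
points of different lengths `d < d'` are impossible: the suffix of length `d` of the longer
right-special prefix is right special, hence equal to the shorter one, so it begins with `v`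
and exhibits an occurrence of `v` strictly inside a complete return word. Hence three return
words would all branch at the same point, giving a factor with three right extensions.
-/

open Finset

section

variable {A : Type*} {W : ℕ → A}

@[simp] lemma length_factorAt (W : ℕ → A) (i n : ℕ) : (factorAt W i n).length = n := by
  simp [factorAt]

@[simp] lemma getElem_factorAt (W : ℕ → A) (i n k : ℕ) (hk : k < (factorAt W i n).length) :
    (factorAt W i n)[k] = W (i + k) := by
  simp [factorAt]

lemma take_factorAt (W : ℕ → A) (i m n : ℕ) :
    (factorAt W i n).take m = factorAt W i (min m n) := by
  rw [factorAt, factorAt, ← List.map_take, List.take_range]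

lemma drop_factorAt (W : ℕ → A) (i m n : ℕ) :
    (factorAt W i n).drop m = factorAt W (i + m) (n - m) :=
  List.ext_getElem (by simp) fun k _ _ => by simp [Nat.add_assoc]

lemma factorAt_add (W : ℕ → A) (i m n : ℕ) :
    factorAt W i (m + n) = factorAt W i m ++ factorAt W (i + m) n := by
  refine List.ext_getElem (by simp) fun k _ _ => ?_
  simp only [getElem_factorAt, List.getElem_append, length_factorAt]
  split_ifs
  · rfl
  · congr 1
    omega

lemma isFactor_factorAt (W : ℕ → A) (i n : ℕ) : IsFactor W (factorAt W i n) :=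
  ⟨i, by simp [occursAt]⟩

lemma occursAt_of_prefix_factorAt {u : List A} {i n : ℕ} (h : u <+: factorAt W i n) :
    occursAt W u i := by
  have hlen : u.length ≤ n := by simpa using h.length_le
  rw [occursAt]
  conv_lhs => rw [List.prefix_iff_eq_take.1 h]
  rw [take_factorAt, min_eq_left hlen]

lemma IsFactor.of_prefix {u u' : List A} (hu : u <+: u') (h : IsFactor W u') : IsFactor W u := by
  obtain ⟨i, hi⟩ := h
  rw [occursAt] at hi
  rw [hi] at hu
  exact ⟨i, occursAt_of_prefix_factorAt hu⟩

lemma IsFactor.of_suffix {u u' : List A} (hu : u <:+ u') (h : IsFactor W u') : IsFactor W u := by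
  obtain ⟨i, hi⟩ := h
  rw [List.suffix_iff_eq_drop.1 hu, hi, drop_factorAt]
  exact isFactor_factorAt W _ _

lemma IsFactor.take_append_getElem {x : List A} (hx : IsFactor W x) {d : ℕ} (hd : d < x.length) :
    IsFactor W (x.take d ++ [x[d]]) := by
  rw [List.take_concat_get']
  exact hx.of_prefix (List.take_prefix _ _)

def IsRightSpecial (W : ℕ → A) (u : List A) : Prop :=
  ∃ a b, a ≠ b ∧ IsFactor W (u ++ [a]) ∧ IsFactor W (u ++ [b])

lemma IsRightSpecial.isFactor {u : List A} (h : IsRightSpecial W u) : IsFactor W u := by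
  obtain ⟨a, -, -, ha, -⟩ := h
  exact ha.of_prefix (List.prefix_append _ _)

lemma IsRightSpecial.of_suffix {u u' : List A} (hu : u <:+ u') (h : IsRightSpecial W u') :
    IsRightSpecial W u := by
  obtain ⟨t, rfl⟩ := hu
  obtain ⟨a, b, hab, ha, hb⟩ := h
  have hsuf : ∀ c : A, u ++ [c] <:+ t ++ u ++ [c] := fun c => ⟨t, by simp⟩
  exact ⟨a, b, hab, ha.of_suffix (hsuf a), hb.of_suffix (hsuf b)⟩

lemma isRightSpecial_take {x y : List A} (hx : IsFactor W x) (hy : IsFactor W y) {d : ℕ}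
    (hdx : d < x.length) (hdy : d < y.length) (htake : x.take d = y.take d) (hne : x[d] ≠ y[d]) :
    IsRightSpecial W (x.take d) :=
  ⟨x[d], y[d], hne, hx.take_append_getElem hdx, htake ▸ hy.take_append_getElem hdy⟩

lemma List.exists_take_eq_getElem_ne {α : Type*} {l₁ l₂ : List α} (h₁ : ¬ l₁ <+: l₂)
    (h₂ : ¬ l₂ <+: l₁) :
    ∃ d, ∃ (hd₁ : d < l₁.length) (hd₂ : d < l₂.length), l₁.take d = l₂.take d ∧ l₁[d] ≠ l₂[d] := by
  induction l₁ generalizing l₂ with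
  | nil => exact absurd (List.nil_prefix) h₁
  | cons a l₁ ih =>
    cases l₂ with
    | nil => exact absurd (List.nil_prefix) h₂
    | cons b l₂ =>
      by_cases hab : a = b
      · subst hab
        simp only [List.cons_prefix_cons, true_and] at h₁ h₂
        obtain ⟨d, hd₁, hd₂, htake, hne⟩ := ih h₁ h₂
        exact ⟨d + 1, by simpa using hd₁, by simpa using hd₂, by simpa using htake,
          by simpa using hne⟩
      · exact ⟨0, by simp, by simp, by simp, hab⟩

lemma exists_next_occurrence (hrec : Recurrent W) {v : List A} (hv : IsFactor W v) (i : ℕ) :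
    ∃ j, i < j ∧ occursAt W v j ∧ ∀ m, i < m → m < j → ¬ occursAt W v m := by
  classical
  have hex : ∃ j, i < j ∧ occursAt W v j := by
    obtain ⟨j, hj, hij⟩ := (hrec v hv).exists_gt i
    exact ⟨j, hij, hj⟩
  exact ⟨Nat.find hex, (Nat.find_spec hex).1, (Nat.find_spec hex).2,
    fun m him hmj hm => Nat.find_min hex hmj ⟨him, hm⟩⟩

lemma periodic_of_forall_isReturnWord_eq (hrec : Recurrent W) {v r : List A} {i₀ : ℕ}
    (hi₀ : occursAt W v i₀) (huniq : ∀ u, IsReturnWord W v u → u = r) :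
    0 < r.length ∧ Function.Periodic (fun n => W (i₀ + n)) r.length := by
  set p := r.length with hpdef
  have step : ∀ i, occursAt W v i → 0 < p ∧ occursAt W v (i + p) ∧ factorAt W i p = r := by
    intro i hi
    obtain ⟨j, hij, hj, hmin⟩ := exists_next_occurrence hrec ⟨i, hi⟩ i
    have hr : factorAt W i (j - i) = r := huniq _ ⟨i, j, hij, hi, hj, hmin, rfl⟩
    have hp : p = j - i := by rw [hpdef, ← hr, length_factorAt]
    rw [hp, Nat.add_sub_cancel' hij.le, ← hp]
    exact ⟨by omega, hj, hp ▸ hr⟩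
  have hocc : ∀ t, occursAt W v (i₀ + t * p) := by
    intro t
    induction t with
    | zero => simpa using hi₀
    | succ t ih => simpa [Nat.succ_mul, Nat.add_assoc] using (step _ ih).2.1
  refine ⟨(step i₀ hi₀).1, fun n => ?_⟩
  have hblock : factorAt W (i₀ + (n / p) * p) p = factorAt W (i₀ + (n / p + 1) * p) p := by
    rw [(step _ (hocc _)).2.2, (step _ (hocc _)).2.2]
  have hmod : n % p < p := Nat.mod_lt _ (step i₀ hi₀).1
  have := List.getElem_of_eq hblock (by simpa using hmod)
  simp only [getElem_factorAt] at this
  have hn := Nat.div_add_mod' n p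
  calc W (i₀ + (n + p)) = W (i₀ + (n / p + 1) * p + n % p) := by congr 1; rw [Nat.succ_mul]; omega
    _ = W (i₀ + n) := by rw [← this]; congr 1; omega

lemma complexity_le_of_periodic {i₀ p : ℕ} (hp : 0 < p)
    (hper : Function.Periodic (fun n => W (i₀ + n)) p) (m : ℕ) : complexity W m ≤ i₀ + p := by
  have hsub : {u | u.length = m ∧ IsFactor W u} ⊆
      (fun i => factorAt W i m) '' Set.Iio (i₀ + p) := by
    rintro u ⟨rfl, i, hi⟩
    rcases lt_or_ge i i₀ with h | h
    · exact ⟨i, Set.mem_Iio.2 (by omega), hi.symm⟩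
    · have := Nat.mod_lt (i - i₀) hp
      refine ⟨i₀ + (i - i₀) % p, Set.mem_Iio.2 (by omega), ?_⟩
      rw [hi]
      refine List.ext_getElem (by simp) fun k _ _ => ?_
      simp only [getElem_factorAt]
      calc W (i₀ + (i - i₀) % p + k) = W (i₀ + ((i - i₀) % p + k) % p) := by
            rw [Nat.add_assoc]; exact (hper.map_mod_nat _).symm
        _ = W (i₀ + (i - i₀ + k)) := by rw [Nat.mod_add_mod]; exact hper.map_mod_nat _
        _ = W (i + k) := by congr 1; omega
  calc complexity W m ≤ ((fun i => factorAt W i m) '' Set.Iio (i₀ + p)).ncard :=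
        Set.ncard_le_ncard hsub ((Set.finite_Iio _).image _)
    _ ≤ (Set.Iio (i₀ + p)).ncard := Set.ncard_image_le (Set.finite_Iio _)
    _ = i₀ + p := by simp

lemma exists_two_returnWords (hrec : Recurrent W) (hunb : ∀ C, ∃ n, C < complexity W n)
    {v : List A} (hv : IsFactor W v) :
    ∃ r₁ r₂, r₁ ≠ r₂ ∧ IsReturnWord W v r₁ ∧ IsReturnWord W v r₂ := by
  obtain ⟨i₀, hi₀⟩ := hv
  obtain ⟨j, hij, hj, hmin⟩ := exists_next_occurrence hrec ⟨i₀, hi₀⟩ i₀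
  have hr : IsReturnWord W v (factorAt W i₀ (j - i₀)) := ⟨i₀, j, hij, hi₀, hj, hmin, rfl⟩
  by_contra! hno
  obtain ⟨hp, hper⟩ := periodic_of_forall_isReturnWord_eq hrec hi₀
    fun u hu => by_contra fun hne => hno u _ hne hu hr
  obtain ⟨n, hn⟩ := hunb (i₀ + (factorAt W i₀ (j - i₀)).length)
  exact hn.not_ge (complexity_le_of_periodic hp hper n)

namespace IsReturnWord

variable {v r s : List A}

lemma exists_append_eq_factorAt (hr : IsReturnWord W v r) :
    ∃ i, occursAt W v i ∧ r ++ v = factorAt W i (r.length + v.length) ∧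
      ∀ t, 0 < t → t < r.length → ¬ occursAt W v (i + t) := by
  obtain ⟨i, j, hij, hi, hj, hmin, rfl⟩ := hr
  refine ⟨i, hi, ?_, fun t ht ht' => hmin _ (by omega) (by rw [length_factorAt] at ht'; omega)⟩
  rw [length_factorAt, factorAt_add, Nat.add_sub_cancel' hij.le, ← hj]

lemma length_pos (hr : IsReturnWord W v r) : 0 < r.length := by
  obtain ⟨i, j, hij, -, -, -, rfl⟩ := hr
  simpa using hij

lemma isFactor_append (hr : IsReturnWord W v r) : IsFactor W (r ++ v) := by
  obtain ⟨i, -, heq, -⟩ := hr.exists_append_eq_factorAt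
  exact heq ▸ isFactor_factorAt W i _

lemma prefix_append (hr : IsReturnWord W v r) : v <+: r ++ v := by
  obtain ⟨i, hi, heq, -⟩ := hr.exists_append_eq_factorAt
  rw [heq]
  conv_lhs => rw [hi]
  rw [Nat.add_comm, factorAt_add]
  exact List.prefix_append _ _

lemma not_prefix_drop (hr : IsReturnWord W v r) {t : ℕ} (ht : 0 < t) (htr : t < r.length) :
    ¬ v <+: (r ++ v).drop t := by
  obtain ⟨i, -, heq, hmin⟩ := hr.exists_append_eq_factorAt
  rw [heq, drop_factorAt]
  exact fun h => hmin t ht htr (occursAt_of_prefix_factorAt h)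

lemma not_append_prefix_append (hr : IsReturnWord W v r) (hs : IsReturnWord W v s)
    (hne : r ≠ s) : ¬ r ++ v <+: s ++ v := by
  intro h
  have hlt : r.length < s.length := by
    by_contra! hle
    have hlen := h.length_le
    simp only [List.length_append] at hlen
    exact hne (List.append_cancel_right (h.eq_of_length (by simp only [List.length_append]; omega)))
  exact hs.not_prefix_drop hr.length_pos hlt (by simpa using h.drop r.length)

lemma exists_branch (hr : IsReturnWord W v r) (hs : IsReturnWord W v s) (hne : r ≠ s) :
    ∃ d, v.length ≤ d ∧ ∃ (hdr : d < (r ++ v).length) (hds : d < (s ++ v).length),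
      (r ++ v).take d = (s ++ v).take d ∧ (r ++ v)[d] ≠ (s ++ v)[d] := by
  obtain ⟨d, hdr, hds, htake, hget⟩ := List.exists_take_eq_getElem_ne
    (hr.not_append_prefix_append hs hne) (hs.not_append_prefix_append hr hne.symm)
  refine ⟨d, ?_, hdr, hds, htake, hget⟩
  by_contra! hdv
  exact hget ((hr.prefix_append.getElem hdv).symm.trans (hs.prefix_append.getElem hdv))

end IsReturnWord

lemma sum_tsub_one_le_of_sum_le {ι : Type*} {s : Finset ι} {f : ι → ℕ} {k : ℕ}
    (hf : ∀ i ∈ s, 1 ≤ f i) (h : ∑ i ∈ s, f i ≤ #s + k) : ∑ i ∈ s, (f i - 1) ≤ k := by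
  have : ∑ i ∈ s, (f i - 1) + #s = ∑ i ∈ s, f i := by
    rw [card_eq_sum_ones, ← sum_add_distrib]
    exact sum_congr rfl fun i hi => Nat.sub_add_cancel (hf i hi)
  omega

section Counting

variable [Fintype A]

lemma finite_setOf_isFactor (W : ℕ → A) (n : ℕ) :
    {u : List A | u.length = n ∧ IsFactor W u}.Finite :=
  (List.finite_length_eq A n).subset fun _ hu => hu.1

noncomputable def factorsOfLength (W : ℕ → A) (n : ℕ) : Finset (List A) :=
  (finite_setOf_isFactor W n).toFinset

open scoped Classical in
noncomputable def rightExtensions (W : ℕ → A) (u : List A) : Finset A :=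
  Finset.univ.filter fun c => IsFactor W (u ++ [c])

@[simp] lemma mem_factorsOfLength {n : ℕ} {u : List A} :
    u ∈ factorsOfLength W n ↔ u.length = n ∧ IsFactor W u :=
  Set.Finite.mem_toFinset _

@[simp] lemma mem_rightExtensions {u : List A} {c : A} :
    c ∈ rightExtensions W u ↔ IsFactor W (u ++ [c]) := by
  simp [rightExtensions]

lemma card_factorsOfLength (W : ℕ → A) (n : ℕ) : #(factorsOfLength W n) = complexity W n :=
  (Set.ncard_eq_toFinset_card _ _).symm

lemma complexity_succ_eq_sum (W : ℕ → A) (n : ℕ) :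
    complexity W (n + 1) = ∑ u ∈ factorsOfLength W n, #(rightExtensions W u) := by
  classical
  have hmaps : Set.MapsTo List.dropLast (factorsOfLength W (n + 1) : Set (List A))
      (factorsOfLength W n : Set (List A)) := by
    intro w hw
    simp only [mem_coe, mem_factorsOfLength] at hw ⊢
    exact ⟨by simp [hw.1], hw.2.of_prefix (List.dropLast_prefix w)⟩
  rw [← card_factorsOfLength, card_eq_sum_card_fiberwise hmaps]
  refine sum_congr rfl fun u hu => ?_
  have hfiber : {w ∈ factorsOfLength W (n + 1) | w.dropLast = u} =
      (rightExtensions W u).image fun c => u ++ [c] := by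
    ext w
    simp only [mem_filter, mem_factorsOfLength, mem_image, mem_rightExtensions]
    constructor
    · rintro ⟨⟨hlen, hw⟩, rfl⟩
      have hne : w ≠ [] := by rintro rfl; simp at hlen
      exact ⟨w.getLast hne, by rwa [List.dropLast_append_getLast hne],
        List.dropLast_append_getLast hne⟩
    · rintro ⟨c, hc, rfl⟩
      exact ⟨⟨by simp [(mem_factorsOfLength.1 hu).1], hc⟩, by simp⟩
  rw [hfiber, card_image_of_injective _ fun a b h => by simpa using h]

lemma one_le_card_rightExtensions {u : List A} (hu : IsFactor W u) :
    1 ≤ #(rightExtensions W u) := by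
  obtain ⟨i, hi⟩ := hu
  refine card_pos.2 ⟨W (i + u.length), mem_rightExtensions.2 ?_⟩
  have : u ++ [W (i + u.length)] = factorAt W i (u.length + 1) := by
    rw [factorAt_add, ← hi]
    simp [factorAt]
  exact this ▸ isFactor_factorAt W i _

lemma sum_card_rightExtensions_sub_one_le {n : ℕ}
    (hn : complexity W (n + 1) ≤ complexity W n + 1) :
    ∑ u ∈ factorsOfLength W n, (#(rightExtensions W u) - 1) ≤ 1 :=
  sum_tsub_one_le_of_sum_le (fun _ hu => one_le_card_rightExtensions (mem_factorsOfLength.1 hu).2)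
    (by rwa [← complexity_succ_eq_sum, card_factorsOfLength])

lemma IsRightSpecial.one_lt_card {u : List A} (h : IsRightSpecial W u) :
    1 < #(rightExtensions W u) := by
  obtain ⟨a, b, hab, ha, hb⟩ := h
  exact Finset.one_lt_card.2 ⟨a, mem_rightExtensions.2 ha, b, mem_rightExtensions.2 hb, hab⟩

lemma card_rightExtensions_le_two {u : List A}
    (hn : complexity W (u.length + 1) ≤ complexity W u.length + 1) :
    #(rightExtensions W u) ≤ 2 := by
  rcases (rightExtensions W u).eq_empty_or_nonempty with h | ⟨c, hc⟩
  · simp [h]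
  · have hu : u ∈ factorsOfLength W u.length :=
      mem_factorsOfLength.2 ⟨rfl, (mem_rightExtensions.1 hc).of_prefix (List.prefix_append _ _)⟩
    have := (single_le_sum (f := fun u => #(rightExtensions W u) - 1) (fun _ _ => Nat.zero_le _)
      hu).trans (sum_card_rightExtensions_sub_one_le hn)
    omega

lemma IsRightSpecial.eq_of_length_eq {u₁ u₂ : List A}
    (hn : complexity W (u₁.length + 1) ≤ complexity W u₁.length + 1)
    (h₁ : IsRightSpecial W u₁) (h₂ : IsRightSpecial W u₂) (hl : u₁.length = u₂.length) :
    u₁ = u₂ := by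
  classical
  by_contra hne
  have hsub : {u₁, u₂} ⊆ factorsOfLength W u₁.length :=
    insert_subset_iff.2 ⟨mem_factorsOfLength.2 ⟨rfl, h₁.isFactor⟩,
      singleton_subset_iff.2 (mem_factorsOfLength.2 ⟨hl.symm, h₂.isFactor⟩)⟩
  have := (sum_le_sum_of_subset (f := fun u => #(rightExtensions W u) - 1) hsub).trans
    (sum_card_rightExtensions_sub_one_le hn)
  rw [sum_pair hne] at this
  have := h₁.one_lt_card
  have := h₂.one_lt_card
  omega

namespace IsReturnWord

variable {v r s : List A}

lemma not_isRightSpecial_take (hs : IsReturnWord W v s) {u : List A}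
    (hn : complexity W (u.length + 1) ≤ complexity W u.length + 1) (hu : IsRightSpecial W u)
    (hvu : v <+: u) {d : ℕ} (hud : u.length < d) (hd : d < (s ++ v).length) :
    ¬ IsRightSpecial W ((s ++ v).take d) := by
  intro h
  set t := d - u.length
  have hsuffix : ((s ++ v).take d).drop t = u :=
    (hu.eq_of_length_eq hn (h.of_suffix (List.drop_suffix _ _))
      (by simp only [List.length_drop, List.length_take]; omega)).symm
  have hvlen := hvu.length_le
  simp only [List.length_append] at hd
  refine hs.not_prefix_drop (t := t) (by omega) (by omega) ?_
  exact hvu.trans (hsuffix ▸ (List.take_prefix d (s ++ v)).drop t)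

lemma branch_length_eq (hn : ∀ n, v.length ≤ n → complexity W (n + 1) ≤ complexity W n + 1)
    (hr : IsReturnWord W v r) (hs : IsReturnWord W v s) {d d' : ℕ} (hd : v.length ≤ d)
    (hd' : v.length ≤ d') (hdr : d < (r ++ v).length) (hds : d' < (s ++ v).length)
    (h : IsRightSpecial W ((r ++ v).take d)) (h' : IsRightSpecial W ((s ++ v).take d')) :
    d = d' := by
  have key : ∀ {x y : List A} {e e' : ℕ}, IsReturnWord W v x → IsReturnWord W v y →
      v.length ≤ e → e < (x ++ v).length → e' < (y ++ v).length → e < e' →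
      IsRightSpecial W ((x ++ v).take e) → ¬ IsRightSpecial W ((y ++ v).take e') := by
    intro x y e e' hx hy he hex hey hlt hxe
    have hlen : ((x ++ v).take e).length = e := by simp only [List.length_take]; omega
    exact hy.not_isRightSpecial_take (hn _ (by omega)) hxe
      (List.prefix_take_iff.2 ⟨hx.prefix_append, he⟩) (by omega) hey
  rcases lt_trichotomy d d' with hlt | heq | hgt
  · exact absurd h' (key hr hs hd hdr hds hlt h)
  · exact heq
  · exact absurd h (key hs hr hd' hds hdr hgt h')

lemma eq_or_eq (hn : ∀ n, v.length ≤ n → complexity W (n + 1) ≤ complexity W n + 1)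
    {r₁ r₂ : List A} (hr₁ : IsReturnWord W v r₁) (hr₂ : IsReturnWord W v r₂)
    (hr : IsReturnWord W v r) (hne : r₁ ≠ r₂) : r = r₁ ∨ r = r₂ := by
  by_contra! hr₁₂
  obtain ⟨d, hd, hdr, hd₁, htake₁, hget₁⟩ := hr.exists_branch hr₁ hr₁₂.1
  obtain ⟨d₂, hd₂, hdr₂, hd₂₂, htake₂, hget₂⟩ := hr.exists_branch hr₂ hr₁₂.2
  obtain ⟨d₁₂, hd₁₂, hd₁₁₂, hd₂₁₂, htake₁₂, hget₁₂⟩ := hr₁.exists_branch hr₂ hne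
  have hrs := isRightSpecial_take hr.isFactor_append hr₁.isFactor_append hdr hd₁ htake₁ hget₁
  obtain rfl : d = d₂ := branch_length_eq hn hr hr hd hd₂ hdr hdr₂ hrs
    (isRightSpecial_take hr.isFactor_append hr₂.isFactor_append hdr₂ hd₂₂ htake₂ hget₂)
  obtain rfl : d = d₁₂ := branch_length_eq hn hr hr₁ hd hd₁₂ hdr hd₁₁₂ hrs
    (isRightSpecial_take hr₁.isFactor_append hr₂.isFactor_append hd₁₁₂ hd₂₁₂ htake₁₂ hget₁₂)
  have hmem : ∀ {y : List A}, IsReturnWord W v y → (r ++ v).take d = (y ++ v).take d →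
      ∀ hdy : d < (y ++ v).length, (y ++ v)[d] ∈ rightExtensions W ((r ++ v).take d) :=
    fun hy htake hdy => mem_rightExtensions.2 (htake ▸ hy.isFactor_append.take_append_getElem hdy)
  have hlen : ((r ++ v).take d).length = d := by simp only [List.length_take]; omega
  have hthree : 2 < #(rightExtensions W ((r ++ v).take d)) :=
    two_lt_card.2 ⟨_, hmem hr rfl hdr, _, hmem hr₁ htake₁ hd₁, _, hmem hr₂ htake₂ hd₂₂,
      hget₁, hget₂, hget₁₂⟩
  exact hthree.not_ge (card_rightExtensions_le_two (hn _ (by omega)))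

end IsReturnWord

end Counting

end

/-- A recurrent word of eventual complexity `n + K` has, for all sufficiently
long factors, exactly two distinct return words. -/
theorem stmt18 {A : Type*} [Fintype A] (W : ℕ → A) (hrec : Recurrent W)
    (N K : ℕ) (h : ∀ n : ℕ, N ≤ n → complexity W n = n + K) :
    ∃ k : ℕ, ∀ v : List A, IsFactor W v → k ≤ v.length →
      {u : List A | IsReturnWord W v u}.ncard = 2 := by
  have hstep : ∀ n, N ≤ n → complexity W (n + 1) ≤ complexity W n + 1 := fun n hn => by
    rw [h n hn, h (n + 1) (by omega)]
    omega
  have hunb : ∀ C, ∃ n, C < complexity W n := fun C => ⟨N + C + 1, by rw [h _ (by omega)]; omega⟩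
  refine ⟨N, fun v hv hvN => Set.ncard_eq_two.2 ?_⟩
  obtain ⟨r₁, r₂, hne, hr₁, hr₂⟩ := exists_two_returnWords hrec hunb hv
  refine ⟨r₁, r₂, hne, Set.ext fun r => ⟨fun hr => ?_, ?_⟩⟩
  · exact IsReturnWord.eq_or_eq (fun n hn => hstep n (hvN.trans hn)) hr₁ hr₂ hr hne
  · rintro (rfl | rfl) <;> assumption
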